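/- arXiv:2307.09961 — 3 statements merged into one kernel-verified Lean document; each statement's English description precedes it below -/
import Mathlib

section
/- Let Π be a permutation of {1, …, m} and define η_∞ = max_{k ∈ [m]} |k − Π(k)|. Then for every i ∈ [m], letting p(i) be the largest j such that {1, …, j} ⊆ {Π(1), …, Π(i)}, we have i − p(i) ≤ η_∞. -/
open Classical in
/-- The number of "out-of-order" elements among the first `i+1` values of a
permutation is bounded by its `ℓ∞` displacement. -/
theorem prefix_error_le_linf (m : ℕ) (π : Equiv.Perm (Fin m)) (η : ℕ)
    (hη : ∀ k : Fin m, |((k : ℕ) : ℤ) - ((π k : ℕ) : ℤ)| ≤ (η : ℤ)) :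
    ∀ i : Fin m,
      (i : ℕ) + 1 -
        Nat.findGreatest
          (fun j => ∀ k : Fin m, (k : ℕ) < j → ∃ l : Fin m, l ≤ i ∧ π l = k) m
      ≤ η := by
  intro i
  set P : ℕ → Prop := fun j => ∀ k : Fin m, (k : ℕ) < j → ∃ l : Fin m, l ≤ i ∧ π l = k with hPdef
  set p := Nat.findGreatest P m with hp
  rcases le_or_gt ((i : ℕ) + 1) p with h | h
  · simp [Nat.sub_eq_zero_of_le h]
  · have hpm : p < m := lt_of_lt_of_le h i.2
    have hP0 : P 0 := fun k hk => absurd hk (Nat.not_lt_zero _)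
    have hPp : P p := Nat.findGreatest_spec (Nat.zero_le _) hP0
    have hnot : ¬ P (p + 1) := Nat.findGreatest_is_greatest (Nat.lt_succ_self p) hpm
    simp only [hPdef] at hnot
    push_neg at hnot
    obtain ⟨k, hk1, hk2⟩ := hnot
    have hkp : (k : ℕ) = p := by
      rcases Nat.lt_succ_iff_lt_or_eq.mp hk1 with h' | h'
      · obtain ⟨l, hl1, hl2⟩ := hPp k h'
        exact absurd hl2 (hk2 l hl1)
      · exact h'
    set l₀ := π.symm k with hl
    have hπl : π l₀ = k := π.apply_symm_apply k
    have hil : (i : ℕ) < (l₀ : ℕ) := by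
      by_contra hle
      push_neg at hle
      exact hk2 l₀ (Fin.le_def.mpr hle) hπl
    have h2 := hη l₀
    rw [hπl, hkp] at h2
    have h1 : ((l₀ : ℕ) : ℤ) - (p : ℤ) ≤ (η : ℤ) := le_trans (le_abs_self _) h2
    omega
end

section
/- Let G = (V, E) be a finite directed graph, fix vertices u, v, and suppose E = E_pre ∪ E_err. Let S be the set of vertices consisting of u, v, and all endpoints of edges in E_err. Define a directed graph H on vertex set S with an edge (x,y) whenever (x,y) ∈ E_err or there is a directed path from x to y in (V, E_pre). Then there is a directed path from u to v in G if and only if there is a directed path from u to v in H. -/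
/-- Correctness of the auxiliary reachability graph `H` built on the endpoints
of out-of-order edges: reachability in `G = (V, E_pre ∪ E_err)` is equivalent
to reachability in `H`. -/
theorem auxiliary_graph_reachability {V : Type*} [Fintype V]
    (Epre Eerr : V → V → Prop) (u v : V) (S : Set V)
    (hu : u ∈ S) (hv : v ∈ S) (hS : ∀ x y, Eerr x y → x ∈ S ∧ y ∈ S) :
    Relation.ReflTransGen (fun a b => Epre a b ∨ Eerr a b) u v ↔
      Relation.ReflTransGen
        (fun x y => x ∈ S ∧ y ∈ S ∧
          (Eerr x y ∨ Relation.ReflTransGen Epre x y)) u v := by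
  set H : V → V → Prop := fun x y => x ∈ S ∧ y ∈ S ∧
      (Eerr x y ∨ Relation.ReflTransGen Epre x y) with hH
  constructor
  · intro h
    -- strengthened claim
    have key : ∀ v', Relation.ReflTransGen (fun a b => Epre a b ∨ Eerr a b) u v' →
        ∃ w, Relation.ReflTransGen H u w ∧ w ∈ S ∧
        Relation.ReflTransGen Epre w v' := by
      intro v' h'
      induction h' with
      | refl => exact ⟨u, .refl, hu, .refl⟩
      | tail hab hbc ih =>
        obtain ⟨w, hw, hwS, hwb⟩ := ih
        rcases hbc with hpre | herr
        · exact ⟨w, hw, hwS, hwb.tail hpre⟩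
        · obtain ⟨hbS, hcS⟩ := hS _ _ herr
          refine ⟨_, (hw.tail ⟨hwS, hbS, Or.inr hwb⟩).tail ⟨hbS, hcS, Or.inl herr⟩,
            hcS, .refl⟩
    obtain ⟨w, hw, hwS, hwv⟩ := key v h
    exact hw.tail ⟨hwS, hv, Or.inr hwv⟩
  · intro h
    induction h with
    | refl => exact .refl
    | tail _ hbc ih =>
      obtain ⟨hbS, _, herr | hpre⟩ := hbc
      · exact (ih hbS).tail (Or.inr herr)
      · exact (ih hbS).trans (Relation.ReflTransGen.mono (fun a b hab => Or.inl hab) _ _ hpre)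
end

section
/- Let G = (V, E) be a finite directed graph with unit edge lengths, E = E_pre ∪ E_err, u, v ∈ V, and ε ≥ 0. Let S ⊇ {u, v} contain all endpoints of edges of E_err. Let H be the weighted digraph on S with: an edge (x,y) of weight 1 for each (x,y) ∈ E_err, and an edge (x,y) of weight w(x,y) whenever x ≠ y are connected in (V, E_pre), where w(x,y) is any real with d_pre(x,y) ≤ w(x,y) ≤ (1+ε)·d_pre(x,y) (d_pre = shortest path distance in (V, E_pre)). Then the weighted distance d_H(u,v) satisfies d_G(u,v) ≤ d_H(u,v) ≤ (1+ε)·d_G(u,v), where d_G(u,v) is the unweighted shortest-path distance in G (distances are +∞ if unreachable). -/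
open scoped ENNReal

/-- Unweighted (hop-count) shortest-path distance in a digraph, `+∞` if unreachable. -/
noncomputable def hopDist {V : Type*} (E : V → V → Prop) (u v : V) : ℝ≥0∞ :=
  sInf {c | ∃ (k : ℕ) (p : Fin (k + 1) → V),
    p 0 = u ∧ p (Fin.last k) = v ∧
    (∀ i : Fin k, E (p i.castSucc) (p i.succ)) ∧ c = (k : ℝ≥0∞)}

/-- Weighted shortest-path distance in a digraph, `+∞` if unreachable. -/
noncomputable def wDist {V : Type*} (H : V → V → Prop) (ω : V → V → ℝ≥0∞)
    (u v : V) : ℝ≥0∞ :=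
  sInf {c | ∃ (k : ℕ) (p : Fin (k + 1) → V),
    p 0 = u ∧ p (Fin.last k) = v ∧
    (∀ i : Fin k, H (p i.castSucc) (p i.succ)) ∧
    c = ∑ i : Fin k, ω (p i.castSucc) (p i.succ)}

section Aux

variable {V : Type*} {H : V → V → Prop} {ω : V → V → ℝ≥0∞}

lemma wDist_le_path {u v : V} {k : ℕ} (p : Fin (k + 1) → V)
    (h0 : p 0 = u) (hl : p (Fin.last k) = v)
    (he : ∀ i : Fin k, H (p i.castSucc) (p i.succ)) :
    wDist H ω u v ≤ ∑ i : Fin k, ω (p i.castSucc) (p i.succ) :=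
  sInf_le ⟨k, p, h0, hl, he, rfl⟩

lemma wDist_self (x : V) : wDist H ω x x = 0 := by
  refine le_antisymm ?_ zero_le
  have := wDist_le_path (H := H) (ω := ω) (u := x) (v := x) (k := 0)
    (fun _ => x) rfl rfl (fun i => i.elim0)
  simpa using this

lemma tail_edges {m : ℕ} (p : Fin (m + 2) → V)
    (hp : ∀ i : Fin (m + 1), H (p i.castSucc) (p i.succ)) :
    ∀ i : Fin m, H (p i.castSucc.succ) (p i.succ.succ) := by
  intro i
  have := hp i.succ
  rw [← Fin.succ_castSucc] at this
  exact this

lemma sum_tail {m : ℕ} (p : Fin (m + 2) → V) (g : V → V → ℝ≥0∞) :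
    ∑ i : Fin (m + 1), g (p i.castSucc) (p i.succ)
      = g (p 0) (p 1) + ∑ i : Fin m, g (p i.castSucc.succ) (p i.succ.succ) := by
  rw [Fin.sum_univ_succ]
  simp only [Fin.succ_castSucc, Fin.castSucc_zero, Fin.succ_zero_eq_one]

lemma wDist_cons {x y z : V} (hxy : H x y) :
    wDist H ω x z ≤ ω x y + wDist H ω y z := by
  rw [← tsub_le_iff_left]
  refine le_sInf ?_
  rintro c ⟨k, q, hq0, hql, hqe, rfl⟩
  rw [tsub_le_iff_left]
  set r : Fin (k + 2) → V := Fin.cons x q with hr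
  have hr0 : r 0 = x := Fin.cons_zero _ _
  have hr1 : r 1 = y := by
    rw [← Fin.succ_zero_eq_one, hr, Fin.cons_succ, hq0]
  have hrs : ∀ i : Fin (k + 1), r i.succ = q i := fun i => Fin.cons_succ _ _ _
  have hrl : r (Fin.last (k + 1)) = z := by
    rw [← Fin.succ_last, hrs, hql]
  have hedges : ∀ i : Fin (k + 1), H (r i.castSucc) (r i.succ) := by
    intro i
    induction i using Fin.cases with
    | zero =>
      rw [Fin.castSucc_zero, hr0, Fin.succ_zero_eq_one, hr1]
      exact hxy
    | succ j =>
      rw [hrs, ← Fin.succ_castSucc, hrs]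
      exact hqe j
  have hpath := wDist_le_path (H := H) (ω := ω) (u := x) (v := z) r hr0 hrl hedges
  refine le_trans hpath (le_of_eq ?_)
  rw [sum_tail r ω, hr0, hr1]
  all_goals
    exact congrArg _ (Finset.sum_congr rfl fun i _ => by
      simp only [hrs])

lemma wDist_le_edge {x y : V} (hxy : H x y) : wDist H ω x y ≤ ω x y := by
  have := wDist_cons (ω := ω) (z := y) hxy
  simpa [wDist_self] using this

lemma wDist_path_add {z : V} : ∀ (k : ℕ) (p : Fin (k + 1) → V),
    (∀ i : Fin k, H (p i.castSucc) (p i.succ)) →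
    wDist H ω (p 0) z ≤
      (∑ i : Fin k, ω (p i.castSucc) (p i.succ)) + wDist H ω (p (Fin.last k)) z := by
  intro k
  induction k with
  | zero => intro p _; simp
  | succ m ih =>
    intro p hp
    have h1 : H (p 0) (p 1) := by
      have := hp 0
      rwa [Fin.castSucc_zero, Fin.succ_zero_eq_one] at this
    have htail : wDist H ω (p 1) z ≤
        (∑ i : Fin m, ω (p i.castSucc.succ) (p i.succ.succ))
          + wDist H ω (p (Fin.last (m + 1))) z := by
      have := ih (fun i => p i.succ) (tail_edges p hp)
      simpa [Fin.succ_last, Fin.succ_zero_eq_one] using this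
    calc wDist H ω (p 0) z ≤ ω (p 0) (p 1) + wDist H ω (p 1) z := wDist_cons h1
      _ ≤ ω (p 0) (p 1) + ((∑ i : Fin m, ω (p i.castSucc.succ) (p i.succ.succ))
            + wDist H ω (p (Fin.last (m + 1))) z) := add_le_add_right htail _
      _ = (∑ i : Fin (m + 1), ω (p i.castSucc) (p i.succ))
            + wDist H ω (p (Fin.last (m + 1))) z := by
          rw [sum_tail p ω]
          exact (add_assoc _ _ _).symm

lemma wDist_triangle (x y z : V) :
    wDist H ω x z ≤ wDist H ω x y + wDist H ω y z := by
  rw [← tsub_le_iff_right]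
  refine le_sInf ?_
  rintro c ⟨k, p, hp0, hpl, hpe, rfl⟩
  rw [tsub_le_iff_right, add_comm]
  have := wDist_path_add (ω := ω) (z := z) k p hpe
  rw [hp0, hpl] at this
  simpa [add_comm] using this

lemma wDist_le_wDist {H' : V → V → Prop} {ω' : V → V → ℝ≥0∞}
    (hedge : ∀ x y, H x y → wDist H' ω' x y ≤ ω x y) (u v : V) :
    wDist H' ω' u v ≤ wDist H ω u v := by
  refine le_sInf ?_
  rintro c ⟨k, p, hp0, hpl, hpe, rfl⟩
  subst hp0 hpl
  induction k with
  | zero => simp [wDist_self]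
  | succ m ih =>
    have h1 : H (p 0) (p 1) := by
      have := hpe 0
      rwa [Fin.castSucc_zero, Fin.succ_zero_eq_one] at this
    have htail : wDist H' ω' (p 1) (p (Fin.last (m + 1))) ≤
        ∑ i : Fin m, ω (p i.castSucc.succ) (p i.succ.succ) := by
      have := ih (fun i => p i.succ) (tail_edges p hpe)
      simpa [Fin.succ_last, Fin.succ_zero_eq_one] using this
    calc wDist H' ω' (p 0) (p (Fin.last (m + 1)))
        ≤ wDist H' ω' (p 0) (p 1) + wDist H' ω' (p 1) (p (Fin.last (m + 1))) :=
          wDist_triangle _ _ _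
      _ ≤ ω (p 0) (p 1) + ∑ i : Fin m, ω (p i.castSucc.succ) (p i.succ.succ) :=
          add_le_add (hedge _ _ h1) htail
      _ = ∑ i : Fin (m + 1), ω (p i.castSucc) (p i.succ) := (sum_tail p ω).symm

lemma hopDist_eq_wDist (E : V → V → Prop) (u v : V) :
    hopDist E u v = wDist E (fun _ _ => (1 : ℝ≥0∞)) u v := by
  unfold hopDist wDist
  congr 1
  ext c
  constructor <;> rintro ⟨k, p, h0, hl, he, rfl⟩ <;> exact ⟨k, p, h0, hl, he, by simp⟩

lemma hopDist_le_path {E : V → V → Prop} {u v : V} {k : ℕ} (p : Fin (k + 1) → V)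
    (h0 : p 0 = u) (hl : p (Fin.last k) = v)
    (he : ∀ i : Fin k, E (p i.castSucc) (p i.succ)) :
    hopDist E u v ≤ (k : ℝ≥0∞) :=
  sInf_le ⟨k, p, h0, hl, he, rfl⟩

lemma rtg_of_path {E : V → V → Prop} : ∀ (k : ℕ) (p : Fin (k + 1) → V),
    (∀ i : Fin k, E (p i.castSucc) (p i.succ)) →
    Relation.ReflTransGen E (p 0) (p (Fin.last k)) := by
  intro k
  induction k with
  | zero => intro p _; exact Relation.ReflTransGen.refl
  | succ m ih =>
    intro p hp
    have h1 : E (p 0) (p 1) := by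
      have := hp 0
      rwa [Fin.castSucc_zero, Fin.succ_zero_eq_one] at this
    have htail : Relation.ReflTransGen E (p 1) (p (Fin.last (m + 1))) := by
      have := ih (fun i => p i.succ) (tail_edges p hp)
      simpa [Fin.succ_last, Fin.succ_zero_eq_one] using this
    exact Relation.ReflTransGen.head h1 htail

end Aux

open Classical in
/-- The weighted auxiliary graph `H` gives a `(1+ε)`-approximation of the
unweighted distance in `G = (V, E_pre ∪ E_err)`. -/
theorem auxiliary_graph_approx_distance {V : Type*} [Fintype V]
    (Epre Eerr : V → V → Prop) (u v : V) (ε : ℝ) (hε : 0 ≤ ε)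
    (S : Set V) (hu : u ∈ S) (hv : v ∈ S)
    (hS : ∀ x y, Eerr x y → x ∈ S ∧ y ∈ S)
    (w : V → V → ℝ)
    (hw : ∀ x y, x ≠ y → Relation.ReflTransGen Epre x y →
      hopDist Epre x y ≤ ENNReal.ofReal (w x y) ∧
      ENNReal.ofReal (w x y) ≤ ENNReal.ofReal (1 + ε) * hopDist Epre x y) :
    hopDist (fun a b => Epre a b ∨ Eerr a b) u v ≤
      wDist
        (fun x y => x ∈ S ∧ y ∈ S ∧
          (Eerr x y ∨ (x ≠ y ∧ Relation.ReflTransGen Epre x y)))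
        (fun x y => if Eerr x y then (1 : ℝ≥0∞) else ENNReal.ofReal (w x y))
        u v ∧
    wDist
        (fun x y => x ∈ S ∧ y ∈ S ∧
          (Eerr x y ∨ (x ≠ y ∧ Relation.ReflTransGen Epre x y)))
        (fun x y => if Eerr x y then (1 : ℝ≥0∞) else ENNReal.ofReal (w x y))
        u v ≤
      ENNReal.ofReal (1 + ε) * hopDist (fun a b => Epre a b ∨ Eerr a b) u v := by
  set E : V → V → Prop := fun a b => Epre a b ∨ Eerr a b with hE
  set Hrel : V → V → Prop := fun x y => x ∈ S ∧ y ∈ S ∧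
      (Eerr x y ∨ (x ≠ y ∧ Relation.ReflTransGen Epre x y)) with hHrel
  set ω : V → V → ℝ≥0∞ :=
      fun x y => if Eerr x y then (1 : ℝ≥0∞) else ENNReal.ofReal (w x y) with hω
  set A : ℝ≥0∞ := ENNReal.ofReal (1 + ε) with hA
  have hA1 : (1 : ℝ≥0∞) ≤ A := by
    rw [hA, ← ENNReal.ofReal_one]
    exact ENNReal.ofReal_le_ofReal (by linarith)
  have hA0 : A ≠ 0 := by
    intro h
    rw [h] at hA1
    simp at hA1
  have hAtop : A ≠ ⊤ := by rw [hA]; exact ENNReal.ofReal_ne_top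
  -- per-edge bound for the lower direction
  have hmono : ∀ x y : V, Epre x y → wDist E (fun _ _ => (1:ℝ≥0∞)) x y ≤ 1 :=
    fun x y h => wDist_le_edge (Or.inl h)
  have hedge : ∀ x y : V, Hrel x y → wDist E (fun _ _ => (1:ℝ≥0∞)) x y ≤ ω x y := by
    intro x y hxy
    obtain ⟨-, -, herr | ⟨hne, hrtg⟩⟩ := hxy
    · rw [hω]
      simp only [herr, if_true]
      exact wDist_le_edge (Or.inr herr)
    · by_cases hE' : Eerr x y
      · rw [hω]; simp only [hE', if_true]
        exact wDist_le_edge (Or.inr hE')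
      · rw [hω]; simp only [hE', if_false]
        refine le_trans ?_ ((hw x y hne hrtg).1)
        rw [hopDist_eq_wDist]
        exact wDist_le_wDist hmono x y
  constructor
  · rw [hopDist_eq_wDist]
    exact wDist_le_wDist hedge u v
  · -- upper bound: key claim by strong induction on path length
    have key : ∀ k : ℕ, ∀ p : Fin (k + 1) → V, p 0 ∈ S → p (Fin.last k) = v →
        (∀ i : Fin k, E (p i.castSucc) (p i.succ)) →
        wDist Hrel ω (p 0) v ≤ A * k := by
      intro k
      induction k using Nat.strong_induction_on with
      | _ k IH =>
        match k with
        | 0 =>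
          intro p _ hpl _
          have h0v : p 0 = v := by
            rw [← hpl]; exact congrArg p (Fin.ext (by simp))
          rw [h0v, wDist_self]
          exact zero_le
        | (m + 1) =>
          intro p hp0S hpl hpe
          by_cases hall : ∀ i : Fin (m + 1), Epre (p i.castSucc) (p i.succ)
          · -- all edges in Epre
            have hrtg : Relation.ReflTransGen Epre (p 0) v := by
              have := rtg_of_path (m + 1) p hall
              rwa [hpl] at this
            by_cases hxv : p 0 = v
            · rw [hxv, wDist_self]; exact zero_le
            · have hHedge : Hrel (p 0) v := ⟨hp0S, hv, Or.inr ⟨hxv, hrtg⟩⟩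
              refine le_trans (wDist_le_edge hHedge) ?_
              rw [hω]
              by_cases herr : Eerr (p 0) v
              · simp only [herr, if_true]
                calc (1 : ℝ≥0∞) = 1 * 1 := (one_mul 1).symm
                  _ ≤ A * ((m + 1 : ℕ) : ℝ≥0∞) :=
                      mul_le_mul' hA1 (by exact_mod_cast Nat.succ_le_succ (Nat.zero_le m))
              · simp only [herr, if_false]
                refine le_trans ((hw (p 0) v hxv hrtg).2) ?_
                exact mul_le_mul_right (hopDist_le_path p rfl hpl hall) A
          · -- there is an `Eerr` edge; take the first one
            push_neg at hall
            have hex : ∃ n : ℕ, ∃ hn : n < m + 1,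
                Eerr (p (⟨n, hn⟩ : Fin (m + 1)).castSucc) (p (⟨n, hn⟩ : Fin (m + 1)).succ) := by
              obtain ⟨i, hi⟩ := hall
              rcases hpe i with h | h
              · exact absurd h hi
              · exact ⟨i.val, i.isLt, h⟩
            set j := Nat.find hex with hj
            obtain ⟨hjlt, herr⟩ := Nat.find_spec hex
            have hmin : ∀ n < j, ∀ hn : n < m + 1,
                ¬ Eerr (p (⟨n, hn⟩ : Fin (m + 1)).castSucc) (p (⟨n, hn⟩ : Fin (m + 1)).succ) :=
              fun n hn hn' hc => Nat.find_min hex hn ⟨hn', hc⟩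
            set a := p ((⟨j, hjlt⟩ : Fin (m + 1)).castSucc) with ha
            set b := p ((⟨j, hjlt⟩ : Fin (m + 1)).succ) with hb
            obtain ⟨haS, hbS⟩ := hS a b herr
            -- prefix path from `p 0` to `a`, all edges in Epre, length `j`
            set q : Fin (j + 1) → V := fun i => p ⟨i.val, by omega⟩ with hq
            have hq0 : q 0 = p 0 := by
              rw [hq]; exact congrArg p (Fin.ext (by simp))
            have hql : q (Fin.last j) = a := by
              rw [hq, ha]; exact congrArg p (Fin.ext (by simp))
            have hqedges : ∀ i : Fin j, Epre (q i.castSucc) (q i.succ) := by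
              intro i
              have hilt : i.val < m + 1 := by omega
              rcases hpe ⟨i.val, hilt⟩ with h | h
              · have e1 : q i.castSucc = p ((⟨i.val, hilt⟩ : Fin (m + 1)).castSucc) := by
                  rw [hq]; exact congrArg p (Fin.ext (by simp))
                have e2 : q i.succ = p ((⟨i.val, hilt⟩ : Fin (m + 1)).succ) := by
                  rw [hq]; exact congrArg p (Fin.ext (by simp))
                rw [e1, e2]; exact h
              · exact absurd h (hmin i.val i.isLt hilt)
            have bound1 : wDist Hrel ω (p 0) a ≤ A * (j : ℝ≥0∞) := by
              by_cases hxa : p 0 = a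
              · rw [hxa, wDist_self]; exact zero_le
              · have hj1 : 1 ≤ j := by
                  rcases Nat.eq_zero_or_pos j with h0 | h1
                  · exfalso
                    apply hxa
                    rw [ha]
                    refine congrArg p (Fin.ext ?_)
                    simp [h0]
                  · exact h1
                have hrtg : Relation.ReflTransGen Epre (p 0) a := by
                  have := rtg_of_path j q hqedges
                  rwa [hq0, hql] at this
                have hHedge : Hrel (p 0) a := ⟨hp0S, haS, Or.inr ⟨hxa, hrtg⟩⟩
                refine le_trans (wDist_le_edge hHedge) ?_
                rw [hω]
                by_cases herr' : Eerr (p 0) a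
                · simp only [herr', if_true]
                  calc (1 : ℝ≥0∞) = 1 * 1 := (one_mul 1).symm
                    _ ≤ A * (j : ℝ≥0∞) := mul_le_mul' hA1 (by exact_mod_cast hj1)
                · simp only [herr', if_false]
                  refine le_trans ((hw (p 0) a hxa hrtg).2) ?_
                  exact mul_le_mul_right (hopDist_le_path q hq0 hql hqedges) A
            have bound2 : ω a b ≤ A := by
              rw [hω]
              simp only [herr, if_true]
              exact hA1
            have bound3 : wDist Hrel ω b v ≤ A * ((m - j : ℕ) : ℝ≥0∞) := by
              set r : Fin ((m - j) + 1) → V := fun i => p ⟨j + 1 + i.val, by omega⟩ with hr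
              have hr0 : r 0 = b := by
                rw [hr, hb]; exact congrArg p (Fin.ext (by simp))
              have hrl : r (Fin.last (m - j)) = v := by
                rw [hr, ← hpl]
                refine congrArg p (Fin.ext ?_)
                simp [Fin.last]
                omega
              have hredges : ∀ i : Fin (m - j), E (r i.castSucc) (r i.succ) := by
                intro i
                have hilt : j + 1 + i.val < m + 1 := by omega
                have e1 : r i.castSucc = p ((⟨j + 1 + i.val, hilt⟩ : Fin (m + 1)).castSucc) := by
                  rw [hr]; exact congrArg p (Fin.ext (by simp))
                have e2 : r i.succ = p ((⟨j + 1 + i.val, hilt⟩ : Fin (m + 1)).succ) := by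
                  rw [hr]
                  refine congrArg p (Fin.ext ?_)
                  simp [Fin.succ]
                  omega
                rw [e1, e2]
                exact hpe _
              have := IH (m - j) (by omega) r (by rw [hr0]; exact hbS) hrl hredges
              rwa [hr0] at this
            have hab : Hrel a b := ⟨haS, hbS, Or.inl herr⟩
            calc wDist Hrel ω (p 0) v
                ≤ wDist Hrel ω (p 0) a + wDist Hrel ω a v := wDist_triangle _ _ _
              _ ≤ wDist Hrel ω (p 0) a + (ω a b + wDist Hrel ω b v) :=
                  add_le_add_right (wDist_cons hab) _
              _ ≤ A * (j : ℝ≥0∞) + (A + A * ((m - j : ℕ) : ℝ≥0∞)) :=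
                  add_le_add bound1 (add_le_add bound2 bound3)
              _ = A * ((j : ℝ≥0∞) + (1 + ((m - j : ℕ) : ℝ≥0∞))) := by ring
              _ = A * ((m + 1 : ℕ) : ℝ≥0∞) := by
                  congr 1
                  have hnat : (j + (1 + (m - j)) : ℕ) = m + 1 := by omega
                  rw [← hnat]
                  push_cast
                  ring
    -- conclude via the division trick
    have hfin : wDist Hrel ω u v / A ≤ hopDist E u v := by
      refine le_sInf ?_
      rintro c ⟨k, p, hp0, hpl, hpe, rfl⟩
      rw [ENNReal.div_le_iff_le_mul (Or.inl hA0) (Or.inl hAtop), mul_comm]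
      have := key k p (by rw [hp0]; exact hu) hpl hpe
      rwa [hp0] at this
    have := (ENNReal.div_le_iff_le_mul (Or.inl hA0) (Or.inl hAtop)).mp hfin
    rwa [mul_comm] at this
end
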